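/- Let G be a graph with n vertices, e edges, adjacency matrix A, and least adjacency eigenvalue τ < 0. Then the vector chromatic number of G satisfies χ_vec(G) ≥ 1 − (2e/n)/τ. -/

import Mathlib

/-!
Weak duality for the vector chromatic number SDP: if `P ⪰ 0` is entrywise nonnegative with
`tr P = 1`, supported on the diagonal and the edges, and `M` is feasible for the value `λ`, then the
Schur product theorem gives `0 ≤ ∑ P_uv M_uv ≤ λ · tr P - ∑ P_uv = λ - ∑ P_uv`.
Since `τ` is the least eigenvalue of `A`, the matrix `A - τI` is positive semidefinite, so
`P = (A - τI)/(-nτ)` is such a matrix, and its entry sum is `(2e - nτ)/(-nτ) = 1 - (2e/n)/τ`.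
-/

open Matrix Finset SimpleGraph

/-- The vector chromatic number, as the optimal value of the SDP:
minimize `λ` subject to `M ⪰ 0`, `M_{vv} = λ - 1` for all `v`, and `M_{uv} ≤ -1`
on edges. -/
noncomputable def chiVecSDP {V : Type} [Fintype V] (G : SimpleGraph V) : ℝ :=
  sInf {lam : ℝ | ∃ M : Matrix V V ℝ, M.PosSemidef ∧ (∀ v, M v v = lam - 1) ∧
    ∀ u v, G.Adj u v → M u v ≤ -1}

namespace Matrix

variable {n : Type*} [Fintype n]

theorem IsHermitian.posSemidef_sub_smul_one [DecidableEq n] {A : Matrix n n ℝ}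
    (hA : A.IsHermitian) {τ : ℝ} (h : ∀ (μ : ℝ) (x : n → ℝ), x ≠ 0 → A *ᵥ x = μ • x → τ ≤ μ) :
    (A - τ • 1).PosSemidef := by
  rw [posSemidef_iff_isHermitian_and_spectrum_nonneg]
  refine ⟨hA.sub (isHermitian_one.smul (IsSelfAdjoint.all τ)), fun a ha => ?_⟩
  rw [← Algebra.algebraMap_eq_smul_one, ← spectrum.sub_singleton_eq] at ha
  obtain ⟨μ, hμ, rfl⟩ : ∃ μ ∈ spectrum ℝ A, μ - τ = a := by simpa using ha
  rw [← spectrum_toLin', ← Module.End.hasEigenvalue_iff_mem_spectrum] at hμ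
  obtain ⟨x, hx⟩ := hμ.exists_hasEigenvector
  have := h μ x hx.2 (by simpa using hx.apply_eq_smul)
  rw [Set.mem_ofPred_eq]
  linarith

theorem PosSemidef.sum_mul_apply_nonneg {A B : Matrix n n ℝ} (hA : A.PosSemidef)
    (hB : B.PosSemidef) : 0 ≤ ∑ i, ∑ j, A i j * B i j := by
  simpa [dotProduct, mulVec, hadamard] using (hA.hadamard hB).dotProduct_mulVec_nonneg 1

end Matrix

namespace SimpleGraph

variable {V : Type} [Fintype V] (G : SimpleGraph V)

structure IsChiVecDualFeasible (P : Matrix V V ℝ) : Prop where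
  posSemidef : P.PosSemidef
  nonneg : ∀ u v, 0 ≤ P u v
  trace_eq_one : P.trace = 1
  eq_zero_of_not_adj : ∀ u v, u ≠ v → ¬ G.Adj u v → P u v = 0

theorem exists_posSemidef_diag_eq_card_sub_one [DecidableEq V] :
    ∃ M : Matrix V V ℝ, M.PosSemidef ∧ (∀ v, M v v = (Fintype.card V : ℝ) - 1) ∧
      ∀ u v, G.Adj u v → M u v ≤ -1 := by
  refine ⟨(⊤ : SimpleGraph V).lapMatrix ℝ, posSemidef_lapMatrix ℝ _, fun v => ?_,
    fun u v huv => ?_⟩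
  · have : 1 ≤ Fintype.card V := Fintype.card_pos_iff.mpr ⟨v⟩
    simp [lapMatrix, degMatrix, this]
  · simp [lapMatrix, degMatrix, huv.ne]

variable {G}

theorem IsChiVecDualFeasible.sum_le {P M : Matrix V V ℝ} {lam : ℝ}
    (hP : G.IsChiVecDualFeasible P) (hM : M.PosSemidef) (hdiag : ∀ v, M v v = lam - 1)
    (hedge : ∀ u v, G.Adj u v → M u v ≤ -1) : ∑ u, ∑ v, P u v ≤ lam := by
  classical
  have hterm : ∀ u v, P u v * M u v ≤ lam * P u v * (1 : Matrix V V ℝ) u v - P u v := by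
    intro u v
    rcases eq_or_ne u v with rfl | huv
    · rw [hdiag, one_apply_eq]
      exact le_of_eq (by ring)
    by_cases hadj : G.Adj u v
    · rw [one_apply_ne huv]
      nlinarith [hP.nonneg u v, hedge u v hadj]
    · simp [hP.eq_zero_of_not_adj u v huv hadj]
  have hsum : ∑ u, ∑ v, (lam * P u v * (1 : Matrix V V ℝ) u v - P u v)
      = lam * P.trace - ∑ u, ∑ v, P u v := by
    simp [sum_sub_distrib, one_apply, trace, mul_sum]
  have := (hP.posSemidef.sum_mul_apply_nonneg hM).trans
    (sum_le_sum fun u _ => sum_le_sum fun v _ => hterm u v)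
  rw [hsum, hP.trace_eq_one] at this
  linarith

theorem IsChiVecDualFeasible.sum_le_chiVecSDP {P : Matrix V V ℝ}
    (hP : G.IsChiVecDualFeasible P) : ∑ u, ∑ v, P u v ≤ chiVecSDP G := by
  classical
  refine le_csInf ⟨_, G.exists_posSemidef_diag_eq_card_sub_one⟩ ?_
  rintro lam ⟨M, hM, hdiag, hedge⟩
  exact hP.sum_le hM hdiag hedge

variable (G) [DecidableRel G.Adj]

theorem sum_adjMatrix_apply {R : Type*} [NonAssocSemiring R] :
    ∑ u, ∑ v, G.adjMatrix R u v = 2 * #G.edgeFinset := by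
  simp only [adjMatrix_apply, sum_boole, ← neighborFinset_eq_filter, card_neighborFinset_eq_degree]
  rw [← Nat.cast_sum, G.sum_degrees_eq_twice_card_edges, Nat.cast_mul, Nat.cast_ofNat]

theorem sum_adjMatrix_sub_smul_one_apply [DecidableEq V] (τ : ℝ) :
    ∑ u, ∑ v, (G.adjMatrix ℝ - τ • 1) u v = 2 * #G.edgeFinset - τ * Fintype.card V := by
  simp only [Matrix.sub_apply, sum_sub_distrib, sum_adjMatrix_apply]
  simp [one_apply, mul_comm]

theorem isChiVecDualFeasible_smul_adjMatrix_sub_smul_one [DecidableEq V] [Nonempty V] {τ : ℝ}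
    (hτ : τ < 0) (hleast : ∀ (μ : ℝ) (x : V → ℝ), x ≠ 0 → G.adjMatrix ℝ *ᵥ x = μ • x → τ ≤ μ) :
    G.IsChiVecDualFeasible ((-(Fintype.card V * τ))⁻¹ • (G.adjMatrix ℝ - τ • 1)) := by
  have hn : (0 : ℝ) < Fintype.card V := by exact_mod_cast Fintype.card_pos
  have hc : 0 ≤ (-(Fintype.card V * τ))⁻¹ := inv_nonneg.mpr (by nlinarith)
  have hB : ∀ u v, 0 ≤ (G.adjMatrix ℝ - τ • 1) u v := by
    intro u v
    rcases eq_or_ne u v with rfl | huv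
    · simp [hτ.le]
    · simp only [Matrix.sub_apply, Matrix.smul_apply, one_apply_ne huv, adjMatrix_apply]
      split_ifs <;> norm_num
  refine ⟨((G.isHermitian_adjMatrix ℝ).posSemidef_sub_smul_one hleast).smul hc,
    fun u v => mul_nonneg hc (hB u v), ?_, fun u v huv hadj => ?_⟩
  · rw [trace_smul, trace_sub, trace_adjMatrix, trace_smul, trace_one, smul_eq_mul, smul_eq_mul]
    field_simp [hτ.ne]
    ring
  · simp [adjMatrix_apply, huv, hadj]

end SimpleGraph

theorem stmt13 {V : Type} [Fintype V] [DecidableEq V]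
    (G : SimpleGraph V) [DecidableRel G.Adj] (τ : ℝ) (hτ : τ < 0)
    (heig : ∃ x : V → ℝ, x ≠ 0 ∧ (G.adjMatrix ℝ).mulVec x = τ • x)
    (hleast : ∀ (μ : ℝ) (x : V → ℝ), x ≠ 0 →
      (G.adjMatrix ℝ).mulVec x = μ • x → τ ≤ μ) :
    1 - (2 * (G.edgeFinset.card : ℝ) / (Fintype.card V : ℝ)) / τ ≤ chiVecSDP G := by
  obtain ⟨x, hx, -⟩ := heig
  obtain ⟨v, -⟩ := Function.ne_iff.mp hx
  have : Nonempty V := ⟨v⟩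
  have hsum : ∑ u, ∑ v, ((-(Fintype.card V * τ))⁻¹ • (G.adjMatrix ℝ - τ • 1)) u v
      = 1 - (2 * (G.edgeFinset.card : ℝ) / (Fintype.card V : ℝ)) / τ := by
    simp only [Matrix.smul_apply, smul_eq_mul, ← mul_sum, sum_adjMatrix_sub_smul_one_apply]
    field_simp [hτ.ne]
    ring
  exact hsum ▸ (G.isChiVecDualFeasible_smul_adjMatrix_sub_smul_one hτ hleast).sum_le_chiVecSDP
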